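/- Let h, w, κ, τ, n, R be positive integers. Let V consist of w columns S₁,…,S_w, each a tuple of κ·h vertices with R-multilinear labels in [n]. Sample a pair (E, H) as follows: for each i independently, choose a uniformly random perfect matching between S_i and S_{i+1} (indices mod w), giving the simple-edge configuration E; then, independently for each i, partition the κ·h edges of the i-th matching uniformly at random into h groups of κ edges and merge each group into an order-2κ hyperedge, giving H, where the label of a hyperedge records the multiset of labels of its κ endpoints in S_i and the multiset of labels of its κ endpoints in S_{i+1} (so hyperedges on the same vertex labels but with a different split between S_i and S_{i+1} count as distinct). Let A be the event that every labeled hyperedge of (V,H) occurs with even multiplicity and exactly τ distinct labeled hyperedges occur, and let B be the event that every labeled simple edge of (V,E) occurs with even multiplicity and at most κ·τ distinct labeled simple edges occur. If Pr[A] > 0, then Pr[B | A] ≥ (1/κ!)^{wh}. -/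

import Mathlib

open Finset

/-- The cyclic successor of `i` in `Fin w`. -/
def succW {w : ℕ} (i : Fin w) : Fin w := ⟨((i : ℕ) + 1) % w, Nat.mod_lt _ i.pos⟩

/-- A tuple is `R`-multilinear if no element of `[n]` occurs more than `R` times among
its coordinates. -/
def isMultilinearN {n R : ℕ} {ι : Type*} [Fintype ι] [DecidableEq ι]
    (I : ι → Fin n) : Prop :=
  ∀ a : Fin n, (Finset.univ.filter (fun t => I t = a)).card ≤ R

/-- An (ordered) grouping of the `κ·h` matching edges of a column into `h` groups of `κ`
edges each. -/
abbrev Grouping (κ h : ℕ) :=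
  {g : Fin (κ * h) → Fin h // ∀ j, (Finset.univ.filter (fun t => g t = j)).card = κ}

/-- Sample space for the two-step sampling: independently for each column, a uniformly
random perfect matching (a bijection between consecutive columns) together with a uniformly
random grouping of its edges into groups of size `κ`. -/
abbrev SampleSpace (w κ h : ℕ) :=
  (Fin w → Equiv.Perm (Fin (κ * h))) × (Fin w → Grouping κ h)

/-- The label of the order-`2κ` hyperedge obtained from group `j` of column `i`. -/
def hypLabel {n κ h w : ℕ} (S : Fin w → Fin (κ * h) → Fin n)
    (ω : SampleSpace w κ h) (p : Fin w × Fin h) : Multiset (Fin n) × Multiset (Fin n) :=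
  ((Finset.univ.filter (fun t => (ω.2 p.1).1 t = p.2)).val.map (S p.1),
   (Finset.univ.filter (fun t => (ω.2 p.1).1 t = p.2)).val.map
      (fun t => S (succW p.1) (ω.1 p.1 t)))

/-- The labeled simple edge through position `t` of column `i`. -/
def simpleLabel {n κ h w : ℕ} (S : Fin w → Fin (κ * h) → Fin n)
    (ω : SampleSpace w κ h) (p : Fin w × Fin (κ * h)) : Sym2 (Fin n) :=
  Sym2.mk (S p.1 p.2) (S (succW p.1) (ω.1 p.1 p.2))

-- `A`: the sampled hypergraph is even with exactly `τ` distinct labeled hyperedges.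
open Classical in
noncomputable def eventA {n κ h w : ℕ} (S : Fin w → Fin (κ * h) → Fin n) (τ : ℕ) :
    Finset (SampleSpace w κ h) :=
  Finset.univ.filter (fun ω =>
    (∀ ℓ : Multiset (Fin n) × Multiset (Fin n),
      Even (((Finset.univ : Finset (Fin w × Fin h)).filter
        (fun p => hypLabel S ω p = ℓ)).card)) ∧
    ((Finset.univ : Finset (Fin w × Fin h)).image (hypLabel S ω)).card = τ)

-- `B`: the sampled simple-edge configuration is even with at most `κ·τ` distinct labeled
-- simple edges.
open Classical in
noncomputable def eventB {n κ h w : ℕ} (S : Fin w → Fin (κ * h) → Fin n) (κτ : ℕ) :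
    Finset (SampleSpace w κ h) :=
  Finset.univ.filter (fun ω =>
    (∀ e : Sym2 (Fin n),
      Even (((Finset.univ : Finset (Fin w × Fin (κ * h))).filter
        (fun p => simpleLabel S ω p = e)).card)) ∧
    ((Finset.univ : Finset (Fin w × Fin (κ * h))).image (simpleLabel S ω)).card ≤ κτ)

/-! Inside every group, rematch the `κ` left endpoints with the `κ` right endpoints in sorted
(label, position) order. This changes no hyperedge label, so it maps `A` into `A`. Afterwards the
simple edges of a hyperedge are determined by its label alone (the `k`-th smallest left label is
joined to the `k`-th smallest right label), so every labeled simple edge inherits even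
multiplicity from the hyperedges, and each of the `τ` hyperedge labels contributes at most `κ`
simple edge labels: the rematched configuration lies in `B`. A configuration is recovered from its
rematching together with the permutation of sorted positions inside each of the `w·h` groups, so
the rematching is at most `(κ!)^{wh}`-to-one, whence `|A| ≤ (κ!)^{wh} |A ∩ B|`. -/

theorem List.count_ofFn {α : Type*} [DecidableEq α] {n : ℕ} (v : Fin n → α) (a : α) :
    (List.ofFn v).count a = #{i | v i = a} := by
  rw [← Multiset.coe_count, ← Fin.univ_val_map, Multiset.count_map]
  simp [card_def, filter_val, eq_comm]

theorem List.zipWith_ofFn {α β γ : Type*} {n : ℕ} (f : α → β → γ) (a : Fin n → α)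
    (b : Fin n → β) :
    List.zipWith f (List.ofFn a) (List.ofFn b) = List.ofFn fun i => f (a i) (b i) := by
  apply List.ext_getElem <;> simp

theorem even_sum_comp_of_even_card_fiber {ι γ : Type*} [Fintype ι] [DecidableEq γ]
    (f : ι → γ) (c : γ → ℕ) (hf : ∀ ℓ, Even #{q | f q = ℓ}) : Even (∑ q, c (f q)) := by
  rw [sum_comp]
  exact even_sum _ fun ℓ _ => (hf ℓ).mul_right _

section SortByLabel

variable {α β : Type*} [LinearOrder α] [LinearOrder β]

def labelLex (f : α → β) : α ↪ β ×ₗ α :=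
  ⟨fun a => toLex (f a, a), fun _ _ hab => congrArg (fun x => (ofLex x).2) hab⟩

noncomputable def sortByLabel (f : α → β) (T : Finset α) {k : ℕ} (hT : #T = k) (i : Fin k) : α :=
  (ofLex ((T.map (labelLex f)).orderEmbOfFin (by rwa [card_map]) i)).2

variable (f : α → β) (T : Finset α) {k : ℕ} (hT : #T = k)

theorem labelLex_sortByLabel (i : Fin k) :
    labelLex f (sortByLabel f T hT i) =
      (T.map (labelLex f)).orderEmbOfFin (by rwa [card_map]) i := by
  obtain ⟨a, -, ha⟩ := mem_map.1 (orderEmbOfFin_mem (T.map (labelLex f)) (by rwa [card_map]) i)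
  rw [sortByLabel, ← ha]
  rfl

theorem sortByLabel_mem (i : Fin k) : sortByLabel f T hT i ∈ T := by
  obtain ⟨a, ha, ha'⟩ := mem_map.1 (orderEmbOfFin_mem (T.map (labelLex f)) (by rwa [card_map]) i)
  rw [sortByLabel, ← ha']
  exact ha

theorem sortByLabel_injective : Function.Injective (sortByLabel f T hT) := fun i j hij =>
  (orderEmbOfFin (T.map (labelLex f)) (by rwa [card_map])).injective <| by
    rw [← labelLex_sortByLabel f T hT, ← labelLex_sortByLabel f T hT, hij]

theorem monotone_comp_sortByLabel : Monotone (f ∘ sortByLabel f T hT) := fun i j hij => by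
  have hle := (orderEmbOfFin (T.map (labelLex f)) (by rwa [card_map])).monotone hij
  rw [← labelLex_sortByLabel, ← labelLex_sortByLabel] at hle
  exact Prod.Lex.monotone_fst _ _ hle

theorem image_sortByLabel : univ.image (sortByLabel f T hT) = T :=
  eq_of_subset_of_card_le (image_subset_iff.2 fun i _ => sortByLabel_mem f T hT i) <| by
    rw [card_image_of_injective _ (sortByLabel_injective f T hT), card_univ, Fintype.card_fin, hT]

theorem ofFn_comp_sortByLabel :
    List.ofFn (f ∘ sortByLabel f T hT) = (T.val.map f).sort (· ≤ ·) := by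
  refine List.Perm.eq_of_pairwise'
    (List.pairwise_ofFn.2 fun i j hij => monotone_comp_sortByLabel f T hT hij.le)
    (Multiset.pairwise_sort _ _) ?_
  rw [← Multiset.coe_eq_coe, Multiset.sort_eq, ← Fin.univ_val_map, ← Multiset.map_map,
    ← image_val_of_injOn (sortByLabel_injective f T hT).injOn, image_sortByLabel]

end SortByLabel

section SortedFiber

variable {α β ι : Type*} [LinearOrder α] [Fintype α] [LinearOrder β] [DecidableEq ι] {κ : ℕ}

noncomputable def sortedFiberEquiv (f : α → β) (g : α → ι) (hg : ∀ j, #{t | g t = j} = κ) :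
    ι × Fin κ ≃ α :=
  Equiv.ofBijective (fun p => sortByLabel f {t | g t = p.1} (hg p.1) p.2) <| by
    refine ⟨fun ⟨j, k⟩ ⟨j', k'⟩ hjk => ?_, fun t => ?_⟩
    · obtain rfl : j = j' := by
        have hj := (mem_filter.1 (sortByLabel_mem f _ (hg j) k)).2
        have hj' := (mem_filter.1 (sortByLabel_mem f _ (hg j') k')).2
        exact hj.symm.trans (congrArg g hjk ▸ hj')
      obtain rfl := sortByLabel_injective f _ (hg j) hjk
      rfl
    · have ht : t ∈ univ.image (sortByLabel f {t' | g t' = g t} (hg (g t))) := by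
        rw [image_sortByLabel]
        exact mem_filter.2 ⟨mem_univ t, rfl⟩
      obtain ⟨k, -, hk⟩ := mem_image.1 ht
      exact ⟨(g t, k), hk⟩

variable (f : α → β) (g : α → ι) (hg : ∀ j, #{t | g t = j} = κ)

theorem apply_sortedFiberEquiv (p : ι × Fin κ) : g (sortedFiberEquiv f g hg p) = p.1 :=
  (mem_filter.1 (sortByLabel_mem f _ (hg p.1) p.2)).2

theorem fst_sortedFiberEquiv_symm (t : α) : ((sortedFiberEquiv f g hg).symm t).1 = g t := by
  conv_rhs => rw [← (sortedFiberEquiv f g hg).apply_symm_apply t]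
  rw [apply_sortedFiberEquiv f g hg]

theorem ofFn_comp_sortedFiberEquiv (j : ι) :
    List.ofFn (fun k => f (sortedFiberEquiv f g hg (j, k))) =
      ((filter (fun t => g t = j) univ).val.map f).sort (· ≤ ·) :=
  ofFn_comp_sortByLabel f _ (hg j)

end SortedFiber

section Canonize

theorem filter_comp_symm_eq_map {α ι : Type*} [Fintype α] [DecidableEq ι] (σ : Equiv.Perm α)
    (g : α → ι) (j : ι) :
    filter (fun x => g (σ.symm x) = j) univ =
      (filter (fun t => g t = j) univ).map σ.toEmbedding := by
  rw [map_filter, map_univ_equiv]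
  rfl

variable {n κ h w : ℕ}

noncomputable def Grouping.sortedEquiv {β : Type*} [LinearOrder β] (G : Grouping κ h)
    (f : Fin (κ * h) → β) : Fin h × Fin κ ≃ Fin (κ * h) :=
  sortedFiberEquiv f G.1 G.2

theorem Grouping.apply_sortedEquiv {β : Type*} [LinearOrder β] (G : Grouping κ h)
    (f : Fin (κ * h) → β) (p : Fin h × Fin κ) : G.1 (G.sortedEquiv f p) = p.1 :=
  apply_sortedFiberEquiv f G.1 G.2 p

theorem Grouping.fst_sortedEquiv_symm {β : Type*} [LinearOrder β] (G : Grouping κ h)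
    (f : Fin (κ * h) → β) (t : Fin (κ * h)) : ((G.sortedEquiv f).symm t).1 = G.1 t :=
  fst_sortedFiberEquiv_symm f G.1 G.2 t

def rightGrouping (ω : SampleSpace w κ h) (i : Fin w) : Grouping κ h :=
  ⟨(ω.2 i).1 ∘ (ω.1 i).symm, fun j =>
    (congrArg card (filter_comp_symm_eq_map (ω.1 i) (ω.2 i).1 j)).trans
      ((card_map _).trans ((ω.2 i).2 j))⟩

theorem filter_rightGrouping_eq_map (ω : SampleSpace w κ h) (i : Fin w) (j : Fin h) :
    filter (fun x => (rightGrouping ω i).1 x = j) univ =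
      (filter (fun t => (ω.2 i).1 t = j) univ).map (ω.1 i).toEmbedding :=
  filter_comp_symm_eq_map (ω.1 i) (ω.2 i).1 j

theorem hypLabel_eq_map (S : Fin w → Fin (κ * h) → Fin n) (ω : SampleSpace w κ h) (i : Fin w)
    (j : Fin h) :
    hypLabel S ω (i, j) = ((filter (fun t => (ω.2 i).1 t = j) univ).val.map (S i),
      (filter (fun x => (rightGrouping ω i).1 x = j) univ).val.map (S (succW i))) := by
  rw [filter_rightGrouping_eq_map, map_val, Multiset.map_map]
  rfl

variable (S : Fin w → Fin (κ * h) → Fin n)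

/-- Inside every group, rematch the left endpoints to the right endpoints monotonically in
(label, position) order. -/
noncomputable def canonize (ω : SampleSpace w κ h) : SampleSpace w κ h :=
  (fun i => ((ω.2 i).sortedEquiv (S i)).symm.trans
    ((rightGrouping ω i).sortedEquiv (S (succW i))), ω.2)

theorem canonize_apply_sortedEquiv (ω : SampleSpace w κ h) (i : Fin w) (p : Fin h × Fin κ) :
    (canonize S ω).1 i ((ω.2 i).sortedEquiv (S i) p) =
      (rightGrouping ω i).sortedEquiv (S (succW i)) p := by
  simp [canonize]

theorem rightGrouping_canonize (ω : SampleSpace w κ h) :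
    rightGrouping (canonize S ω) = rightGrouping ω := by
  funext i
  refine Subtype.ext (funext fun x => ?_)
  change (ω.2 i).1 ((ω.2 i).sortedEquiv (S i)
    (((rightGrouping ω i).sortedEquiv (S (succW i))).symm x)) = (rightGrouping ω i).1 x
  rw [Grouping.apply_sortedEquiv, Grouping.fst_sortedEquiv_symm]

theorem hypLabel_canonize (ω : SampleSpace w κ h) : hypLabel S (canonize S ω) = hypLabel S ω := by
  funext ⟨i, j⟩
  rw [hypLabel_eq_map, hypLabel_eq_map, rightGrouping_canonize]
  rfl

end Canonize

section SimpleLabels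

variable {n κ h w : ℕ} (S : Fin w → Fin (κ * h) → Fin n)

def sortedEdgeLabels {β : Type*} [LinearOrder β] (ℓ : Multiset β × Multiset β) : List (Sym2 β) :=
  List.zipWith Sym2.mk (ℓ.1.sort (· ≤ ·)) (ℓ.2.sort (· ≤ ·))

theorem ofFn_simpleLabel_canonize (ω : SampleSpace w κ h) (i : Fin w) (j : Fin h) :
    List.ofFn (fun k => simpleLabel S (canonize S ω) (i, (ω.2 i).sortedEquiv (S i) (j, k))) =
      sortedEdgeLabels (hypLabel S ω (i, j)) := by
  simp only [simpleLabel, canonize_apply_sortedEquiv]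
  rw [← List.zipWith_ofFn, hypLabel_eq_map, sortedEdgeLabels]
  exact congrArg₂ _ (ofFn_comp_sortedFiberEquiv _ _ _ j) (ofFn_comp_sortedFiberEquiv _ _ _ j)

theorem card_filter_simpleLabel_canonize (ω : SampleSpace w κ h) (e : Sym2 (Fin n)) :
    #{p | simpleLabel S (canonize S ω) p = e} =
      ∑ q, (sortedEdgeLabels (hypLabel S ω q)).count e := by
  rw [card_filter, Fintype.sum_prod_type, Fintype.sum_prod_type]
  refine sum_congr rfl fun i _ => ?_
  rw [← Equiv.sum_comp ((ω.2 i).sortedEquiv (S i)), Fintype.sum_prod_type]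
  refine sum_congr rfl fun j _ => ?_
  rw [← ofFn_simpleLabel_canonize, List.count_ofFn, card_filter]

theorem card_image_simpleLabel_canonize_le (ω : SampleSpace w κ h) :
    #(univ.image (simpleLabel S (canonize S ω))) ≤ #(univ.image (hypLabel S ω)) * κ := by
  refine (card_le_card fun e he => ?_).trans
    (card_biUnion_le_card_mul _ (fun ℓ => (sortedEdgeLabels ℓ).toFinset) κ ?_)
  · obtain ⟨⟨i, t⟩, -, rfl⟩ := mem_image.1 he
    obtain ⟨⟨j, k⟩, rfl⟩ := ((ω.2 i).sortedEquiv (S i)).surjective t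
    refine mem_biUnion.2 ⟨_, mem_image_of_mem _ (mem_univ (i, j)), ?_⟩
    rw [List.mem_toFinset, ← ofFn_simpleLabel_canonize, List.mem_ofFn]
    exact ⟨k, rfl⟩
  · intro ℓ hℓ
    obtain ⟨⟨i, j⟩, -, rfl⟩ := mem_image.1 hℓ
    refine (List.toFinset_card_le _).trans ?_
    rw [sortedEdgeLabels, List.length_zipWith, Multiset.length_sort, hypLabel_eq_map,
      Multiset.card_map, ← card_def, (ω.2 i).2 j]
    exact min_le_left _ _

variable {S}

theorem canonize_mem_eventA {τ : ℕ} {ω : SampleSpace w κ h} (hω : ω ∈ eventA S τ) :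
    canonize S ω ∈ eventA S τ := by
  simp only [eventA, mem_filter, mem_univ, true_and] at hω ⊢
  rwa [hypLabel_canonize]

theorem canonize_mem_eventB {τ : ℕ} {ω : SampleSpace w κ h} (hω : ω ∈ eventA S τ) :
    canonize S ω ∈ eventB S (κ * τ) := by
  classical
  obtain ⟨-, heven, hcard⟩ := mem_filter.1 hω
  refine mem_filter.2 ⟨mem_univ _, fun e => ?_, ?_⟩
  · rw [card_filter_simpleLabel_canonize]
    exact even_sum_comp_of_even_card_fiber (hypLabel S ω)
      (fun ℓ => (sortedEdgeLabels ℓ).count e) heven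
  · convert card_image_simpleLabel_canonize_le S ω using 1
    rw [hcard, mul_comm]

end SimpleLabels

section Fibers

variable {n κ h w : ℕ} (S : Fin w → Fin (κ * h) → Fin n)

/-- How the `i`-th matching of `ω` permutes the sorted positions inside group `j`. -/
noncomputable def groupPerm (ω : SampleSpace w κ h) (i : Fin w) (j : Fin h) (k : Fin κ) : Fin κ :=
  (((rightGrouping ω i).sortedEquiv (S (succW i))).symm
    (ω.1 i ((ω.2 i).sortedEquiv (S i) (j, k)))).2

theorem matching_apply_sortedEquiv (ω : SampleSpace w κ h) (i : Fin w) (j : Fin h) (k : Fin κ) :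
    ω.1 i ((ω.2 i).sortedEquiv (S i) (j, k)) =
      (rightGrouping ω i).sortedEquiv (S (succW i)) (j, groupPerm S ω i j k) := by
  set eR := (rightGrouping ω i).sortedEquiv (S (succW i))
  set x := ω.1 i ((ω.2 i).sortedEquiv (S i) (j, k))
  have hj : (eR.symm x).1 = j := by
    rw [Grouping.fst_sortedEquiv_symm]
    change (ω.2 i).1 ((ω.1 i).symm x) = j
    rw [Equiv.symm_apply_apply, Grouping.apply_sortedEquiv]
  have hx : eR.symm x = (j, groupPerm S ω i j k) := Prod.ext hj rfl
  rw [← hx, Equiv.apply_symm_apply]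

theorem groupPerm_injective (ω : SampleSpace w κ h) (i : Fin w) (j : Fin h) :
    Function.Injective (groupPerm S ω i j) := fun k k' hk => by
  have := matching_apply_sortedEquiv S ω i j k
  rw [hk, ← matching_apply_sortedEquiv] at this
  simpa using this

theorem eq_of_canonize_eq_of_groupPerm_eq {ω ω' : SampleSpace w κ h}
    (hc : canonize S ω = canonize S ω') (hJ : groupPerm S ω = groupPerm S ω') : ω = ω' := by
  have hG : ω.2 = ω'.2 := (congrArg Prod.snd hc :)
  have hR : rightGrouping ω = rightGrouping ω' := by
    rw [← rightGrouping_canonize S ω, hc, rightGrouping_canonize]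
  refine Prod.ext (funext fun i => Equiv.ext fun t => ?_) hG
  obtain ⟨⟨j, k⟩, rfl⟩ := ((ω.2 i).sortedEquiv (S i)).surjective t
  rw [matching_apply_sortedEquiv, hG, matching_apply_sortedEquiv, hJ, hR]

theorem card_filter_canonize_eq_le (x : SampleSpace w κ h) :
    #{ω | canonize S ω = x} ≤ κ.factorial ^ (w * h) := by
  calc #{ω | canonize S ω = x}
      ≤ #(univ : Finset (Fin w → Fin h → (Fin κ ↪ Fin κ))) :=
        card_le_card_of_injOn (fun ω i j => ⟨groupPerm S ω i j, groupPerm_injective S ω i j⟩)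
          (fun _ _ => mem_univ _) fun ω hω ω' hω' hJ => by
            refine eq_of_canonize_eq_of_groupPerm_eq S
              (((mem_filter.1 hω).2).trans (mem_filter.1 hω').2.symm) ?_
            funext i j
            exact congrArg DFunLike.coe (congrFun (congrFun hJ i) j)
    _ = κ.factorial ^ (w * h) := by
        rw [card_univ, Fintype.card_fun, Fintype.card_fun, Fintype.card_embedding_eq,
          Fintype.card_fin, Fintype.card_fin, Fintype.card_fin, Nat.descFactorial_self, ← pow_mul,
          mul_comm]

end Fibers

theorem simple_even_given_hyper_even_general
    (h w κ n τ : ℕ)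
    (S : Fin w → Fin (κ * h) → Fin n)
    (hA : (eventA S τ (κ := κ) (h := h) (w := w)).Nonempty) :
    ((1 : ℝ) / (Nat.factorial κ)) ^ (w * h) ≤
      (((eventA S τ ∩ eventB S (κ * τ)).card : ℝ) / ((eventA S τ).card : ℝ)) := by
  have hcard : #(eventA S τ) ≤ κ.factorial ^ (w * h) * #(eventA S τ ∩ eventB S (κ * τ)) :=
    calc #(eventA S τ) ≤ κ.factorial ^ (w * h) * #((eventA S τ).image (canonize S)) :=
          card_le_mul_card_image _ _ fun x _ =>
            (card_le_card (filter_subset_filter _ (subset_univ _))).trans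
              (card_filter_canonize_eq_le S x)
      _ ≤ κ.factorial ^ (w * h) * #(eventA S τ ∩ eventB S (κ * τ)) :=
          Nat.mul_le_mul_left _ <| card_le_card <| image_subset_iff.2 fun _ hω =>
            mem_inter.2 ⟨canonize_mem_eventA hω, canonize_mem_eventB hω⟩
  have hApos : (0 : ℝ) < #(eventA S τ) := by exact_mod_cast hA.card_pos
  rw [div_pow, one_pow, div_le_div_iff₀ (by positivity) hApos, one_mul, mul_comm]
  exact_mod_cast hcard

/-- If the hypergraph sampled from a uniformly random matching-plus-grouping configuration
is even with exactly `τ` distinct labeled hyperedges with positive probability, then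
conditioned on that event, with probability at least `(1/κ!)^{wh}` the underlying
simple-edge configuration is even with at most `κ·τ` distinct labeled simple edges. -/
theorem simple_even_given_hyper_even
    (h w κ n τ R : ℕ) (hh : 0 < h) (hw : 0 < w) (hκ : 0 < κ) (hn : 0 < n)
    (hτ : 0 < τ) (hR : 0 < R)
    (S : Fin w → Fin (κ * h) → Fin n)
    (hmult : ∀ i, isMultilinearN (R := R) (S i))
    (hA : (eventA S τ (κ := κ) (h := h) (w := w)).Nonempty) :
    ((1 : ℝ) / (Nat.factorial κ)) ^ (w * h) ≤
      (((eventA S τ ∩ eventB S (κ * τ)).card : ℝ) / ((eventA S τ).card : ℝ)) :=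
  simple_even_given_hyper_even_general h w κ n τ S hA
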